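/- arXiv:2208.08709 — 10 statements merged into one kernel-verified Lean document; each statement's English description precedes it below -/
import Mathlib

section
/- Let G = (V,E) be a finite simple graph, π : V → {1,…,n} an injective vertex order, and define the canonical hierarchical customizable hub labeling L* by: u ∈ L*(v) iff there exists a simple v-u-path in G on which u has maximum rank under π. Then L* satisfies the customizable cover property: for any two vertices s, t and any simple s-t-path P, the intersection L*(s) ∩ L*(t) contains some vertex of P. -/
/-- The canonical hierarchical customizable hub labeling `Lstar`
(defined by: `u ∈ Lstar v` iff there is a simple `v`-`u`-path on which `u` has
maximum rank w.r.t. the injective order `π`) satisfies the customizable cover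
property. -/
theorem canonical_HCuHL_cover {V : Type*} [Fintype V] (G : SimpleGraph V)
    (π : V → ℕ) (hπ : Function.Injective π)
    (Lstar : V → Set V)
    (hLstar : ∀ v u : V, u ∈ Lstar v ↔
      ∃ p : G.Walk v u, p.IsPath ∧ ∀ w ∈ p.support, π w ≤ π u) :
    ∀ (s t : V) (p : G.Walk s t), p.IsPath →
      ∃ x ∈ p.support, x ∈ Lstar s ∩ Lstar t := by
  intro s t p hp
  classical
  have hne : p.support.toFinset.Nonempty := by
    simp [List.toFinset_nonempty_iff]
  obtain ⟨x, hxmem, hxmax⟩ := p.support.toFinset.exists_max_image π hne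
  rw [List.mem_toFinset] at hxmem
  have hmax : ∀ w ∈ p.support, π w ≤ π x := fun w hw =>
    hxmax w (List.mem_toFinset.mpr hw)
  refine ⟨x, hxmem, ?_, ?_⟩
  · rw [hLstar]
    refine ⟨p.takeUntil x hxmem, hp.takeUntil hxmem, fun w hw => ?_⟩
    exact hmax w (p.support_takeUntil_subset hxmem hw)
  · rw [hLstar]
    refine ⟨(p.dropUntil x hxmem).reverse, (hp.dropUntil hxmem).reverse, fun w hw => ?_⟩
    rw [SimpleGraph.Walk.support_reverse, List.mem_reverse] at hw
    exact hmax w (p.support_dropUntil_subset hxmem hw)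
end

section
/- Let G = (V,E) be a finite simple graph and π an injective vertex order. If L is any customizable hub labeling respecting π (i.e., u ∈ L(v) implies π(u) ≥ π(v), and L satisfies the customizable cover property), then the canonical labeling L* (defined by u ∈ L*(v) iff there is a simple v-u-path on which u has maximum rank) satisfies L*(v) ⊆ L(v) for every vertex v. -/
/-- The canonical HCuHL is minimal: its labels are contained in the
labels of any customizable hub labeling respecting the same order `π`. -/
theorem canonical_HCuHL_minimum {V : Type*} [Fintype V] (G : SimpleGraph V)
    (π : V → ℕ) (hπ : Function.Injective π)
    (L : V → Set V)
    (hresp : ∀ v u : V, u ∈ L v → π v ≤ π u)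
    (hcover : ∀ (s t : V) (p : G.Walk s t), p.IsPath →
      ∃ x ∈ p.support, x ∈ L s ∩ L t)
    (Lstar : V → Set V)
    (hLstar : ∀ v u : V, u ∈ Lstar v ↔
      ∃ p : G.Walk v u, p.IsPath ∧ ∀ w ∈ p.support, π w ≤ π u) :
    ∀ v : V, Lstar v ⊆ L v := by
  intro v u hu
  obtain ⟨p, hp, hmax⟩ := (hLstar v u).mp hu
  obtain ⟨x, hxs, hxv, hxu⟩ := hcover v u p hp
  have hx : x = u := hπ (le_antisymm (hmax x hxs) (hresp u x hxu))
  exact hx ▸ hxv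
end

section
/- Let G = (V,E) be an unweighted graph and π : V → {1,…,n} an injective vertex order. Define edge weights ℓ({u,v}) = 3^{max{π(u),π(v)}}. Then for all vertices v, u: there exists a simple v-u-path on which u has maximum rank (w.r.t. π) if and only if every shortest v-u-path in (G,ℓ) has u as its maximum-rank vertex, i.e., the canonical HCuHL respecting π equals the canonical HHL of the weighted graph (G,ℓ) respecting π. -/
/-!
An edge weighs at most the sum of `3 ^ rank` over its endpoints, and a vertex of a path lies
on at most two of its edges. So if every vertex of a path has rank at most `r`, the path
weighs less than `2 * ∑_{k ≤ r} 3 ^ k < 3 ^ (r + 1)`. A walk leaving a vertex of rank `> r`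
weighs at least `3 ^ (r + 1)`. Hence a shortest `v`-`u`-path, being no heavier than a
path with maximum `u`, visits no vertex of higher rank than `u`. Conversely, a shortest path exists
since the weights are natural numbers, and it witnesses the left-hand side.
-/

/-- The weight of a walk when the edge `{u,v}` has weight `3 ^ max (π u) (π v)`. -/
def powWalkWeight {V : Type*} {G : SimpleGraph V} (π : V → ℕ) {a b : V}
    (p : G.Walk a b) : ℕ :=
  (p.darts.map fun d => (3 : ℕ) ^ max (π d.toProd.1) (π d.toProd.2)).sum

open Finset

theorem Nat.two_mul_sum_three_pow_lt {s : Finset ℕ} {n : ℕ} (hs : ∀ k ∈ s, k < n) :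
    2 * ∑ k ∈ s, 3 ^ k < 3 ^ n :=
  calc 2 * ∑ k ∈ s, 3 ^ k ≤ 2 * ∑ k ∈ range n, 3 ^ k := by
        gcongr
        exact fun k hk => mem_range.2 (hs k hk)
    _ = 2 * ((3 ^ n - 1) / 2) := by rw [Nat.geomSum_eq (by norm_num)]
    _ ≤ 3 ^ n - 1 := Nat.mul_div_le _ _
    _ < 3 ^ n := Nat.sub_lt (by positivity) one_pos

namespace SimpleGraph.Walk

variable {V : Type*} {G : SimpleGraph V} (π : V → ℕ)

@[simp]
theorem powWalkWeight_nil {a : V} : powWalkWeight π (nil : G.Walk a a) = 0 := rfl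

@[simp]
theorem powWalkWeight_cons {a c b : V} (h : G.Adj a c) (q : G.Walk c b) :
    powWalkWeight π (cons h q) = 3 ^ max (π a) (π c) + powWalkWeight π q := by
  simp [powWalkWeight]

theorem powWalkWeight_add_le_two_mul_sum_support {a b : V} (p : G.Walk a b) :
    powWalkWeight π p + 3 ^ π a ≤ 2 * (p.support.map fun w => 3 ^ π w).sum := by
  induction p with
  | nil => simp
  | @cons a c b h q ih =>
    have hmax : 3 ^ max (π a) (π c) ≤ 3 ^ π a + 3 ^ π c := by
      rcases le_total (π a) (π c) with hac | hca
      · simp [max_eq_right hac]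
      · simp [max_eq_left hca]
    simp only [powWalkWeight_cons, support_cons, List.map_cons, List.sum_cons]
    omega

theorem IsPath.powWalkWeight_lt (hπ : Function.Injective π) {a b : V} {p : G.Walk a b}
    (hp : p.IsPath) {r : ℕ} (hr : ∀ w ∈ p.support, π w ≤ r) :
    powWalkWeight π p < 3 ^ (r + 1) := by
  have hnodup : (p.support.map π).Nodup := hp.support_nodup.map hπ
  have hsum : (p.support.map fun w => 3 ^ π w).sum = ∑ k ∈ (p.support.map π).toFinset, 3 ^ k := by
    rw [List.sum_toFinset _ hnodup, List.map_map]
    rfl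
  have hlt : 2 * ∑ k ∈ (p.support.map π).toFinset, 3 ^ k < 3 ^ (r + 1) := by
    refine Nat.two_mul_sum_three_pow_lt fun k hk => ?_
    obtain ⟨w, hw, rfl⟩ := List.mem_map.1 (List.mem_toFinset.1 hk)
    exact Nat.lt_succ_of_le (hr w hw)
  calc powWalkWeight π p ≤ powWalkWeight π p + 3 ^ π a := le_add_right le_rfl
    _ ≤ 2 * (p.support.map fun w => 3 ^ π w).sum := p.powWalkWeight_add_le_two_mul_sum_support π
    _ < 3 ^ (r + 1) := hsum ▸ hlt

theorem pow_le_powWalkWeight {a b : V} {p : G.Walk a b} {w : V} (hw : w ∈ p.support)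
    (hwb : w ≠ b) : 3 ^ π w ≤ powWalkWeight π p := by
  induction p with
  | nil => exact absurd (List.mem_singleton.1 hw) hwb
  | @cons a c b h q ih =>
    rw [powWalkWeight_cons]
    rcases List.mem_cons.1 hw with rfl | hw
    · exact le_add_right (Nat.pow_le_pow_right three_pos (le_max_left _ _))
    · exact le_add_left (ih hw hwb)

end SimpleGraph.Walk

open SimpleGraph.Walk in
theorem canonical_HCuHL_eq_canonical_HHL_general {V : Type*} (G : SimpleGraph V)
    (π : V → ℕ) (hπ : Function.Injective π) :
    ∀ v u : V,
      (∃ p : G.Walk v u, p.IsPath ∧ ∀ w ∈ p.support, π w ≤ π u) ↔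
      ((∃ p : G.Walk v u, p.IsPath) ∧
        ∀ p : G.Walk v u, p.IsPath →
          (∀ q : G.Walk v u, q.IsPath → powWalkWeight π p ≤ powWalkWeight π q) →
          ∀ w ∈ p.support, π w ≤ π u) := by
  intro v u
  constructor
  · rintro ⟨p, hp, hpu⟩
    refine ⟨⟨p, hp⟩, fun q _ hq w hw => ?_⟩
    by_contra! huw
    have hwu : w ≠ u := by rintro rfl; exact lt_irrefl _ huw
    have := calc 3 ^ π w ≤ powWalkWeight π q := pow_le_powWalkWeight π hw hwu
      _ ≤ powWalkWeight π p := hq p hp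
      _ < 3 ^ (π u + 1) := hp.powWalkWeight_lt π hπ hpu
      _ ≤ 3 ^ π w := Nat.pow_le_pow_right three_pos huw
    exact lt_irrefl _ this
  · rintro ⟨⟨p, hp⟩, hshortest⟩
    let weight : {p : G.Walk v u // p.IsPath} → ℕ := fun p => powWalkWeight π p.1
    have : Nonempty {p : G.Walk v u // p.IsPath} := ⟨⟨p, hp⟩⟩
    let q := Function.argmin weight
    exact ⟨q.1, q.2, hshortest q.1 q.2 fun r hr => Function.argmin_le weight ⟨r, hr⟩⟩

/-- With edge weights `ℓ({u,v}) = 3 ^ max (π u) (π v)`, the canonical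
HCuHL respecting `π` equals the canonical HHL of the weighted graph: for all `v, u`,
there is a simple `v`-`u`-path on which `u` has maximum rank iff `v` and `u` are
connected and `u` has maximum rank on every shortest `v`-`u`-path. -/
theorem canonical_HCuHL_eq_canonical_HHL {V : Type*} [Fintype V] (G : SimpleGraph V)
    (π : V → ℕ) (hπ : Function.Injective π) :
    ∀ v u : V,
      (∃ p : G.Walk v u, p.IsPath ∧ ∀ w ∈ p.support, π w ≤ π u) ↔
      ((∃ p : G.Walk v u, p.IsPath) ∧
        ∀ p : G.Walk v u, p.IsPath →
          (∀ q : G.Walk v u, q.IsPath → powWalkWeight π p ≤ powWalkWeight π q) →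
          ∀ w ∈ p.support, π w ≤ π u) :=
  canonical_HCuHL_eq_canonical_HHL_general G π hπ
end

section
/- Let G = (V,E) be a graph with injective vertex order π and let G* be the CCH graph of G w.r.t. π (obtained by adding an edge {v,w} whenever there exists a simple v-w-path whose internal vertices all have rank less than min{π(v),π(w)}). Then for every vertex v, the set of vertices u reachable from v in G* by a path that is strictly increasing w.r.t. π equals the set of vertices u for which there exists a simple v-u-path in G on which u has maximum rank. -/
/-- The CCH graph of `G` w.r.t. the order `π`: vertices `v ≠ w` are adjacent iff
there is a simple `v`-`w`-path in `G` all of whose internal vertices have rank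
smaller than `min (π v) (π w)`. (This includes all original edges of `G`.) -/
def cchGraph {V : Type*} (G : SimpleGraph V) (π : V → ℕ) : SimpleGraph V :=
  SimpleGraph.fromRel (fun v w => ∃ p : G.Walk v w, p.IsPath ∧
    ∀ x ∈ p.support, x ≠ v → x ≠ w → π x < min (π v) (π w))

/-!
An increasing path `v = x₀, x₁, …, x_k = u` in the CCH graph unfolds, edge by edge, into a walk
in `G` on which no vertex ranks above `u`; dropping its cycles gives the required simple path.
Conversely, follow a simple `v`-`u`-path in `G` on which `u` has maximum rank: the first vertex
`y` ranked above `v` is joined to `v` by a shortcut, because every vertex strictly between them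
ranks below `v`, and the rest of the path is treated in the same way starting from `y`.
-/

open SimpleGraph

theorem SimpleGraph.Walk.isChain_support_cons {V : Type*} {G : SimpleGraph V}
    {R : V → V → Prop} {v w u : V} (h : G.Adj v w) (p : G.Walk w u) :
    (Walk.cons h p).support.IsChain R ↔ R v w ∧ p.support.IsChain R := by
  rw [Walk.support_cons, ← p.cons_tail_support, List.isChain_cons_cons]

section

variable {V : Type*} {G : SimpleGraph V} {π : V → ℕ}

theorem cchGraph_adj_of_walk {v w : V} (hvw : v ≠ w) (p : G.Walk v w)
    (hp : ∀ x ∈ p.support, x ≠ v → x ≠ w → π x < min (π v) (π w)) :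
    (cchGraph G π).Adj v w := by
  classical
  rw [cchGraph, fromRel_adj]
  exact ⟨hvw, .inl ⟨p.bypass, p.bypass_isPath,
    fun x hx => hp x (p.support_bypass_subset_support hx)⟩⟩

theorem exists_walk_of_cchGraph_adj {v w : V} (h : (cchGraph G π).Adj v w) :
    ∃ p : G.Walk v w, ∀ x ∈ p.support, x ≠ v → x ≠ w → π x < min (π v) (π w) := by
  rw [cchGraph, fromRel_adj] at h
  obtain ⟨p, -, hp⟩ | ⟨p, -, hp⟩ := h.2
  · exact ⟨p, hp⟩
  · refine ⟨p.reverse, fun x hx hxv hxw => ?_⟩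
    rw [min_comm]
    exact hp x (by simpa using hx) hxw hxv

theorem exists_walk_rank_le_of_cchGraph_walk {v u : V} (P : (cchGraph G π).Walk v u)
    (hP : P.support.IsChain (fun a b => π a < π b)) :
    ∃ q : G.Walk v u, ∀ x ∈ q.support, π x ≤ π u := by
  induction P with
  | nil => exact ⟨.nil, by simp⟩
  | @cons v w u h P ih =>
    obtain ⟨hvw, hP⟩ := (Walk.isChain_support_cons h P).1 hP
    obtain ⟨q, hq⟩ := ih hP
    have hwu : π w ≤ π u := hq w q.start_mem_support
    obtain ⟨r, hr⟩ := exists_walk_of_cchGraph_adj h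
    refine ⟨r.append q, fun x hx => ?_⟩
    rcases (Walk.mem_support_append_iff _ _).1 hx with hx | hx
    · rcases eq_or_ne x v with rfl | hxv
      · omega
      rcases eq_or_ne x w with rfl | hxw
      · exact hwu
      have := hr x hx hxv hxw
      omega
    · exact hq x hx

/-- `q` is the stretch of the path walked since the last shortcut endpoint `v`; the recursion
keeps every vertex of it other than `v` ranked below `v`. -/
theorem exists_cchGraph_walk_of_walk_rank_le (hπ : Function.Injective π) {x u : V}
    (p : G.Walk x u) (hp : ∀ y ∈ p.support, π y ≤ π u) (v : V) (hvu : π v ≤ π u)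
    (q : G.Walk v x) (hq : ∀ y ∈ q.support, y ≠ v → π y < π v) :
    ∃ P : (cchGraph G π).Walk v u, P.support.IsChain (fun a b => π a < π b) := by
  induction p generalizing v with
  | @nil w =>
    obtain rfl : v = w := by
      by_contra hne
      exact (hq _ q.end_mem_support (Ne.symm hne)).not_ge hvu
    exact ⟨.nil, List.isChain_singleton _⟩
  | @cons x y u h p ih =>
    have hp' : ∀ z ∈ p.support, π z ≤ π u := fun z hz => hp z (by simp [hz])
    rcases lt_or_ge (π y) (π v) with hyv | hvy
    · refine ih hp' v hvu (q.concat h) fun z hz hzv => ?_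
      simp only [Walk.support_concat, List.mem_append, List.mem_singleton] at hz
      rcases hz with hz | rfl
      · exact hq z hz hzv
      · exact hyv
    obtain rfl | hne := eq_or_ne v y
    · exact ih hp' v hvu .nil (by simp)
    have hvy : π v < π y := lt_of_le_of_ne hvy (hπ.ne hne)
    have hadj : (cchGraph G π).Adj v y := by
      refine cchGraph_adj_of_walk hne (q.concat h) fun z hz hzv hzy => ?_
      simp only [Walk.support_concat, List.mem_append, List.mem_singleton] at hz
      rcases hz with hz | rfl
      · exact lt_min (hq z hz hzv) ((hq z hz hzv).trans hvy)
      · exact absurd rfl hzy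
    obtain ⟨P, hP⟩ := ih hp' y (hp y (by simp)) .nil (by simp)
    exact ⟨.cons hadj P, (Walk.isChain_support_cons hadj P).2 ⟨hvy, hP⟩⟩

end

theorem searchSpace_eq_canonical_label_general {V : Type*} (G : SimpleGraph V)
    (π : V → ℕ) (hπ : Function.Injective π) (v : V) :
    {u : V | ∃ p : (cchGraph G π).Walk v u,
        List.Chain' (fun a b => π a < π b) p.support} =
    {u : V | ∃ p : G.Walk v u, p.IsPath ∧ ∀ w ∈ p.support, π w ≤ π u} := by
  classical
  ext u
  constructor
  · rintro ⟨P, hP⟩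
    obtain ⟨q, hq⟩ := exists_walk_rank_le_of_cchGraph_walk P hP
    exact ⟨q.bypass, q.bypass_isPath, fun x hx => hq x (q.support_bypass_subset_support hx)⟩
  · rintro ⟨p, -, hp⟩
    exact exists_cchGraph_walk_of_walk_rank_le hπ p hp v (hp v p.start_mem_support) .nil
      (by simp)

/-- For every vertex `v`, the search space of `v` in the CCH graph
(vertices reachable via a strictly `π`-increasing path) equals the canonical HCuHL
label of `v` (vertices `u` such that some simple `v`-`u`-path in `G` has `u` as its
maximum-rank vertex). -/
theorem searchSpace_eq_canonical_label {V : Type*} [Fintype V] (G : SimpleGraph V)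
    (π : V → ℕ) (hπ : Function.Injective π) (v : V) :
    {u : V | ∃ p : (cchGraph G π).Walk v u,
        List.Chain' (fun a b => π a < π b) p.support} =
    {u : V | ∃ p : G.Walk v u, p.IsPath ∧ ∀ w ∈ p.support, π w ≤ π u} :=
  searchSpace_eq_canonical_label_general G π hπ v
end

section
/- Consider the graph G_k with vertex set {s} ∪ {c_0,…,c_{k-1}} ∪ {leaf_{i,j} : 0 ≤ i,j ≤ k−1}, where edges are: {c_i, leaf_{i,j}} of length 1, {c_i, c_j} of length 5 for i ≠ j, {s, leaf_{i,j}} of length 2, and {s, c_i} of length 3. Then the labeling L with L(s) = {s}, L(c_i) = {s} ∪ {c_j : j ≥ i}, and L(leaf_{i,j}) = {s, c_i} is a valid hierarchical hub labeling of G_k: for every pair of vertices u,v there is a shortest u-v-path containing a vertex of L(u) ∩ L(v), and L respects any order π with π(s) maximal and π(c_i) = n − k + i. -/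
/-!
Every walk from `u` has length at least `gkDist u v`, because `gkDist u` increases by at most
`lenGk a b` along each edge `ab`; and every pair of distinct vertices is joined by a path of one or
two edges through a common hub that attains this bound. For the order, the ranks `n - k, …, n - 1`
belong to the centers and only `s` can have rank `n`, so every leaf ranks below every center.
-/

/-- Vertices of the graph `G_k`: the apex `none`, the star centers `some (inl i)`,
and the star leaves `some (inr (i,j))` (leaf `j` of star `i`). -/
abbrev GkVert (k : ℕ) := Option (Fin k ⊕ (Fin k × Fin k))

/-- The apex vertex `s`. -/
def vS {k : ℕ} : GkVert k := none

/-- The star center `c_i`. -/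
def vC {k : ℕ} (i : Fin k) : GkVert k := some (Sum.inl i)

/-- The leaf `leaf_{i,j}` of star `i`. -/
def vL {k : ℕ} (i j : Fin k) : GkVert k := some (Sum.inr (i, j))

/-- Edge lengths of `G_k`: star edges `{c_i, leaf_{i,j}}` have length 1, clique
edges `{c_i, c_j}` (`i ≠ j`) length 5, apex-leaf edges `{s, leaf_{i,j}}` length 2,
apex-center edges `{s, c_i}` length 3; value 0 encodes "no edge". -/
def lenGk {k : ℕ} : GkVert k → GkVert k → ℕ
  | none, none => 0
  | none, some (Sum.inl _) => 3
  | none, some (Sum.inr _) => 2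
  | some (Sum.inl _), none => 3
  | some (Sum.inr _), none => 2
  | some (Sum.inl i), some (Sum.inl j) => if i = j then 0 else 5
  | some (Sum.inl i), some (Sum.inr a) => if i = a.1 then 1 else 0
  | some (Sum.inr a), some (Sum.inl i) => if i = a.1 then 1 else 0
  | some (Sum.inr _), some (Sum.inr _) => 0

/-- The graph `G_k`: `u` and `v` are adjacent iff they are joined by one of the
edges above. -/
def Gk (k : ℕ) : SimpleGraph (GkVert k) :=
  SimpleGraph.fromRel (fun u v => lenGk u v ≠ 0)

/-- The length of a walk in `G_k`. -/
def GkWalkLen {k : ℕ} {u v : GkVert k} (p : (Gk k).Walk u v) : ℕ :=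
  (p.darts.map fun d => lenGk d.toProd.1 d.toProd.2).sum

/-- The labeling `L(s) = {s}`, `L(c_i) = {s} ∪ {c_j : j ≥ i}`,
`L(leaf_{i,j}) = {s, c_i}`. -/
def GkLabel {k : ℕ} : GkVert k → Set (GkVert k)
  | none => {vS}
  | some (Sum.inl i) => {vS} ∪ {v | ∃ j : Fin k, i ≤ j ∧ v = vC j}
  | some (Sum.inr a) => {vS, vC a.1}

theorem SimpleGraph.Walk.le_add_weight_of_potential {V M : Type*} [AddCommMonoid M]
    [PartialOrder M] [IsOrderedAddMonoid M] {G : SimpleGraph V} (w : V → V → M) (f : V → M)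
    (hf : ∀ a b, G.Adj a b → f b ≤ f a + w a b) {u v : V} (p : G.Walk u v) :
    f v ≤ f u + (p.darts.map fun d => w d.fst d.snd).sum := by
  induction p with
  | nil => simp
  | @cons a b c h p ih =>
    calc f c ≤ f b + (p.darts.map fun d => w d.fst d.snd).sum := ih
      _ ≤ f a + w a b + (p.darts.map fun d => w d.fst d.snd).sum := by gcongr; exact hf a b h
      _ = _ := by simp [add_assoc]

section Gk

variable {k : ℕ}

lemma lenGk_symm (a b : GkVert k) : lenGk a b = lenGk b a := by
  rcases a with _ | (i | a) <;> rcases b with _ | (j | b) <;> grind [lenGk]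

lemma lenGk_self (a : GkVert k) : lenGk a a = 0 := by
  rcases a with _ | (i | a) <;> simp [lenGk]

lemma Gk_adj_iff {a b : GkVert k} : (Gk k).Adj a b ↔ lenGk a b ≠ 0 := by
  rw [Gk, SimpleGraph.fromRel_adj, lenGk_symm b a, or_self, and_iff_right_iff_imp]
  rintro h rfl
  exact h (lenGk_self a)

lemma GkWalkLen_reverse {u v : GkVert k} (p : (Gk k).Walk u v) :
    GkWalkLen p.reverse = GkWalkLen p := by
  simp only [GkWalkLen, SimpleGraph.Walk.darts_reverse, List.map_reverse, List.sum_reverse,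
    List.map_map]
  exact congrArg List.sum (List.map_congr_left fun d _ => lenGk_symm _ _)

def gkDist : GkVert k → GkVert k → ℕ
  | none, none => 0
  | none, some (Sum.inl _) => 3
  | none, some (Sum.inr _) => 2
  | some (Sum.inl _), none => 3
  | some (Sum.inr _), none => 2
  | some (Sum.inl i), some (Sum.inl j) => if i = j then 0 else 5
  | some (Sum.inl i), some (Sum.inr a) => if i = a.1 then 1 else 5
  | some (Sum.inr a), some (Sum.inl i) => if i = a.1 then 1 else 5
  | some (Sum.inr a), some (Sum.inr b) => if a = b then 0 else if a.1 = b.1 then 2 else 4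

lemma gkDist_self (u : GkVert k) : gkDist u u = 0 := by
  rcases u with _ | (i | a) <;> simp [gkDist]

lemma gkDist_le_add_lenGk (u : GkVert k) {a b : GkVert k} (hab : lenGk a b ≠ 0) :
    gkDist u b ≤ gkDist u a + lenGk a b := by
  rcases u with _ | (i | ⟨i, j⟩) <;> rcases a with _ | (i' | ⟨i', j'⟩) <;>
    rcases b with _ | (i'' | ⟨i'', j''⟩) <;> simp only [gkDist, lenGk] at hab ⊢ <;> grind

lemma gkDist_le_GkWalkLen {u v : GkVert k} (p : (Gk k).Walk u v) : gkDist u v ≤ GkWalkLen p := by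
  have h := p.le_add_weight_of_potential lenGk (gkDist u)
    fun a b hab => gkDist_le_add_lenGk u (Gk_adj_iff.mp hab)
  rwa [gkDist_self, zero_add] at h

lemma vS_mem_GkLabel (v : GkVert k) : vS ∈ GkLabel v := by
  rcases v with _ | (i | a) <;> simp [GkLabel]

lemma vC_mem_GkLabel_vC {i j : Fin k} (hij : i ≤ j) : vC j ∈ GkLabel (vC i) :=
  Or.inr ⟨j, hij, rfl⟩

lemma vC_mem_GkLabel_vL (i j : Fin k) : vC i ∈ GkLabel (vL i j) := by
  simp [vL, GkLabel]

def HasShortestHubPath (u v : GkVert k) : Prop :=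
  ∃ p : (Gk k).Walk u v, p.IsPath ∧
    (∀ q : (Gk k).Walk u v, q.IsPath → GkWalkLen p ≤ GkWalkLen q) ∧
    ∃ x ∈ p.support, x ∈ GkLabel u ∧ x ∈ GkLabel v

lemma HasShortestHubPath.symm {u v : GkVert k} (h : HasShortestHubPath u v) :
    HasShortestHubPath v u := by
  obtain ⟨p, hp, hmin, x, hx, hxu, hxv⟩ := h
  refine ⟨p.reverse, hp.reverse, fun q hq => ?_, x, by simpa using hx, hxv, hxu⟩
  simpa only [GkWalkLen_reverse] using hmin q.reverse hq.reverse

lemma hasShortestHubPath_of_isPath {u v x : GkVert k} {p : (Gk k).Walk u v} (hp : p.IsPath)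
    (hlen : GkWalkLen p ≤ gkDist u v) (hx : x ∈ p.support) (hxu : x ∈ GkLabel u)
    (hxv : x ∈ GkLabel v) : HasShortestHubPath u v :=
  ⟨p, hp, fun q _ => hlen.trans (gkDist_le_GkWalkLen q), x, hx, hxu, hxv⟩

lemma hasShortestHubPath_of_edge {u v x : GkVert k} (huv : lenGk u v ≠ 0)
    (hlen : lenGk u v ≤ gkDist u v) (hx : x = u ∨ x = v) (hxu : x ∈ GkLabel u)
    (hxv : x ∈ GkLabel v) : HasShortestHubPath u v := by
  have hadj : (Gk k).Adj u v := Gk_adj_iff.mpr huv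
  refine hasShortestHubPath_of_isPath hadj.isPath_toWalk ?_ ?_ hxu hxv
  · simpa [SimpleGraph.Adj.toWalk, GkWalkLen] using hlen
  · simpa [SimpleGraph.Adj.toWalk] using hx

lemma hasShortestHubPath_of_two_edges {u x v : GkVert k} (hux : lenGk u x ≠ 0)
    (hxv : lenGk x v ≠ 0) (huv : u ≠ v) (hlen : lenGk u x + lenGk x v ≤ gkDist u v)
    (hxu : x ∈ GkLabel u) (hxv' : x ∈ GkLabel v) : HasShortestHubPath u v := by
  have h₁ : (Gk k).Adj u x := Gk_adj_iff.mpr hux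
  have h₂ : (Gk k).Adj x v := Gk_adj_iff.mpr hxv
  refine hasShortestHubPath_of_isPath (p := .cons h₁ (.cons h₂ .nil)) ?_ ?_ (by simp) hxu hxv'
  · simp [h₁.ne, h₂.ne, huv]
  · simpa [GkWalkLen, add_assoc] using hlen

lemma hasShortestHubPath_vS_of_ne {v : GkVert k} (hv : vS ≠ v) : HasShortestHubPath vS v := by
  rcases v with _ | (i | a)
  · exact absurd rfl hv
  all_goals
    refine hasShortestHubPath_of_edge ?_ ?_ (.inl rfl) (vS_mem_GkLabel _) (vS_mem_GkLabel _) <;>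
      simp [vS, lenGk, gkDist]

lemma hasShortestHubPath_vC_vC_of_le {i j : Fin k} (hij : i ≤ j) (hne : i ≠ j) :
    HasShortestHubPath (vC i) (vC j) :=
  hasShortestHubPath_of_edge (by simp [vC, lenGk, hne]) (by simp [vC, lenGk, gkDist])
    (.inr rfl) (vC_mem_GkLabel_vC hij) (vC_mem_GkLabel_vC le_rfl)

lemma hasShortestHubPath_vC_vL (i i' j : Fin k) : HasShortestHubPath (vC i) (vL i' j) := by
  rcases eq_or_ne i i' with rfl | hne
  · exact hasShortestHubPath_of_edge (by simp [vC, vL, lenGk]) (by simp [vC, vL, lenGk, gkDist])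
      (.inl rfl) (vC_mem_GkLabel_vC le_rfl) (vC_mem_GkLabel_vL i j)
  · exact hasShortestHubPath_of_two_edges (x := vS) (by simp [vC, vS, lenGk])
      (by simp [vS, vL, lenGk]) (by simp [vC, vL]) (by simp [vC, vS, vL, lenGk, gkDist, hne])
      (vS_mem_GkLabel _) (vS_mem_GkLabel _)

lemma hasShortestHubPath_vL_vL {i j i' j' : Fin k} (hne : vL i j ≠ vL i' j') :
    HasShortestHubPath (vL i j) (vL i' j') := by
  rcases eq_or_ne i i' with rfl | hi
  · exact hasShortestHubPath_of_two_edges (x := vC i) (by simp [vC, vL, lenGk])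
      (by simp [vC, vL, lenGk]) hne (by simp_all [vC, vL, lenGk, gkDist])
      (vC_mem_GkLabel_vL i j) (vC_mem_GkLabel_vL i j')
  · exact hasShortestHubPath_of_two_edges (x := vS) (by simp [vL, vS, lenGk])
      (by simp [vS, vL, lenGk]) hne (by simp [vS, vL, lenGk, gkDist, hi])
      (vS_mem_GkLabel _) (vS_mem_GkLabel _)

lemma hasShortestHubPath_of_ne {u v : GkVert k} (huv : u ≠ v) : HasShortestHubPath u v := by
  rcases u with _ | (i | ⟨i, j⟩)
  · exact hasShortestHubPath_vS_of_ne huv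
  all_goals rcases v with _ | (i' | ⟨i', j'⟩)
  · exact (hasShortestHubPath_vS_of_ne huv.symm).symm
  · have hne : i ≠ i' := fun h => huv (h ▸ rfl)
    rcases le_total i i' with h | h
    · exact hasShortestHubPath_vC_vC_of_le h hne
    · exact (hasShortestHubPath_vC_vC_of_le h hne.symm).symm
  · exact hasShortestHubPath_vC_vL i i' j'
  · exact (hasShortestHubPath_vS_of_ne huv.symm).symm
  · exact (hasShortestHubPath_vC_vL i' i j).symm
  · exact hasShortestHubPath_vL_vL huv

section Order

variable {π : GkVert k → ℕ} {N : ℕ} (hinj : Function.Injective π) (hN : π vS ≤ N)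
  (hmax : ∀ v, π v ≤ π vS) (hc : ∀ i : Fin k, π (vC i) = N - k + i)
include hinj hN hmax hc

lemma rank_vL_le (i j : Fin k) : π (vL i j) ≤ N - k := by
  by_contra! h
  have hleaf := (hmax (vL i j)).trans hN
  rcases hleaf.lt_or_eq with hlt | heq
  · have hcenter := hc ⟨π (vL i j) - (N - k), by omega⟩
    have : vC _ = vL i j := hinj (by rw [hcenter]; simp only; omega)
    simp [vC, vL] at this
  · have : vL i j = vS := hinj (le_antisymm (hmax _) (heq ▸ hN))
    simp [vL, vS] at this

lemma rank_le_of_mem_GkLabel {u v : GkVert k} (hu : u ∈ GkLabel v) : π v ≤ π u := by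
  rcases v with _ | (i | ⟨i, j⟩)
  · obtain rfl : u = vS := hu
    exact le_rfl
  · rcases hu with rfl | ⟨j, hij, rfl⟩
    · exact hmax _
    · change π (vC i) ≤ π (vC j)
      rw [hc, hc]
      exact Nat.add_le_add_left hij _
  · rcases hu with rfl | rfl
    · exact hmax _
    · exact (rank_vL_le hinj hN hmax hc i j).trans (hc i ▸ Nat.le_add_right _ _)

end Order

end Gk

theorem Gk_labeling_valid_HHL_general (k : ℕ) :
    (∀ u v : GkVert k, u ≠ v →
      ∃ p : (Gk k).Walk u v, p.IsPath ∧
        (∀ q : (Gk k).Walk u v, q.IsPath → GkWalkLen p ≤ GkWalkLen q) ∧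
        ∃ x ∈ p.support, x ∈ GkLabel u ∧ x ∈ GkLabel v) ∧
    (∀ π : GkVert k → ℕ, Function.Injective π →
      (∀ v, 1 ≤ π v ∧ π v ≤ 1 + k + k ^ 2) →
      (∀ v, π v ≤ π (vS : GkVert k)) →
      (∀ i : Fin k, π (vC i) = 1 + k + k ^ 2 - k + i) →
      ∀ v u : GkVert k, u ∈ GkLabel v → π v ≤ π u) :=
  ⟨fun _ _ huv => hasShortestHubPath_of_ne huv, fun _ hinj hbound hmax hc _ _ hu =>
    rank_le_of_mem_GkLabel hinj (hbound vS).2 hmax hc hu⟩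

/-- The labeling `GkLabel` is a valid hierarchical hub labeling of
`G_k`: (a) for every pair of distinct vertices `u, v` there is a shortest
`u`-`v`-path containing a vertex of `L(u) ∩ L(v)`; (b) `L` respects any injective
order `π : V → {1,…,n}` (with `n = 1 + k + k²`) in which `s` is maximal and
`π(c_i) = n - k + i`. -/
theorem Gk_labeling_valid_HHL (k : ℕ) (hk : 1 ≤ k) :
    (∀ u v : GkVert k, u ≠ v →
      ∃ p : (Gk k).Walk u v, p.IsPath ∧
        (∀ q : (Gk k).Walk u v, q.IsPath → GkWalkLen p ≤ GkWalkLen q) ∧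
        ∃ x ∈ p.support, x ∈ GkLabel u ∧ x ∈ GkLabel v) ∧
    (∀ π : GkVert k → ℕ, Function.Injective π →
      (∀ v, 1 ≤ π v ∧ π v ≤ 1 + k + k ^ 2) →
      (∀ v, π v ≤ π (vS : GkVert k)) →
      (∀ i : Fin k, π (vC i) = 1 + k + k ^ 2 - k + i) →
      ∀ v u : GkVert k, u ∈ GkLabel v → π v ≤ π u) :=
  Gk_labeling_valid_HHL_general k
end

section
/- Let k vertices c_0,…,c_{k−1} form a clique in a graph G and be ordered by a contraction order π as π(c_0) < … < π(c_{k−1}). Then in any contraction hierarchy of G w.r.t. π, for every i the search space of c_i contains all c_j with j ≥ i; in particular |SS(c_i)| ≥ k − i. -/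
namespace SimpleGraph

variable {V : Type*} {H : SimpleGraph V} (r : V → V → Prop)

theorem exists_walk_support_isChain_nil (v : V) : ∃ p : H.Walk v v, p.support.IsChain r :=
  ⟨Walk.nil, List.isChain_singleton v⟩

theorem Adj.exists_walk_support_isChain {u v : V} (h : H.Adj u v) (huv : r u v) :
    ∃ p : H.Walk u v, p.support.IsChain r :=
  ⟨h.toWalk, by simpa using huv⟩

theorem exists_walk_support_isChain_of_clique {G : SimpleGraph V} (hle : G ≤ H) {k : ℕ}
    {c : Fin k → V} (hclique : ∀ i j : Fin k, i ≠ j → G.Adj (c i) (c j))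
    (hmono : ∀ i j : Fin k, i < j → r (c i) (c j)) {i j : Fin k} (hij : i ≤ j) :
    ∃ p : H.Walk (c i) (c j), p.support.IsChain r := by
  rcases hij.eq_or_lt with rfl | hlt
  · exact exists_walk_support_isChain_nil r (c i)
  · exact (hle (hclique i j hlt.ne)).exists_walk_support_isChain r (hmono i j hlt)

end SimpleGraph

theorem Set.sub_le_ncard_of_forall_le_mem {α : Type*} {k : ℕ} {c : Fin k → α}
    (hc : Function.Injective c) {S : Set α} (hS : S.Finite) (i : Fin k)
    (h : ∀ j, i ≤ j → c j ∈ S) : k - (i : ℕ) ≤ S.ncard := by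
  calc k - (i : ℕ) = (((Finset.Ici i).map ⟨c, hc⟩ : Finset α) : Set α).ncard := by
        rw [Set.ncard_coe_finset, Finset.card_map, Fin.card_Ici]
    _ ≤ S.ncard := Set.ncard_le_ncard (by simpa [Set.subset_def] using h) hS

theorem clique_in_searchSpace_general {V : Type*} [Fintype V]
    (G Gplus : SimpleGraph V) (hle : G ≤ Gplus)
    (π : V → ℕ)
    (k : ℕ) (c : Fin k → V) (hc : Function.Injective c)
    (hclique : ∀ i j : Fin k, i ≠ j → G.Adj (c i) (c j))
    (hmono : ∀ i j : Fin k, i < j → π (c i) < π (c j))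
    (SS : V → Set V)
    (hSS : ∀ v : V, SS v = {u : V | ∃ p : Gplus.Walk v u,
      List.Chain' (fun a b => π a < π b) p.support}) :
    ∀ i : Fin k, (∀ j : Fin k, i ≤ j → c j ∈ SS (c i)) ∧
      k - (i : ℕ) ≤ (SS (c i)).ncard := by
  intro i
  have hmem : ∀ j : Fin k, i ≤ j → c j ∈ SS (c i) := fun j hij => by
    rw [hSS]
    exact SimpleGraph.exists_walk_support_isChain_of_clique _ hle hclique hmono hij
  exact ⟨hmem, Set.sub_le_ncard_of_forall_le_mem hc (Set.toFinite _) i hmem⟩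

/-- If `c_0, …, c_{k-1}` form a clique in `G` and are ordered
increasingly by the contraction order `π`, then in any contraction hierarchy
graph `Gplus ≥ G` the search space of `c_i` (vertices reachable from `c_i` via
strictly `π`-increasing paths) contains all `c_j` with `j ≥ i`; in particular
`|SS(c_i)| ≥ k - i`. -/
theorem clique_in_searchSpace {V : Type*} [Fintype V] [DecidableEq V]
    (G Gplus : SimpleGraph V) (hle : G ≤ Gplus)
    (π : V → ℕ) (hπ : Function.Injective π)
    (k : ℕ) (c : Fin k → V) (hc : Function.Injective c)
    (hclique : ∀ i j : Fin k, i ≠ j → G.Adj (c i) (c j))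
    (hmono : ∀ i j : Fin k, i < j → π (c i) < π (c j))
    (SS : V → Set V)
    (hSS : ∀ v : V, SS v = {u : V | ∃ p : Gplus.Walk v u,
      List.Chain' (fun a b => π a < π b) p.support}) :
    ∀ i : Fin k, (∀ j : Fin k, i ≤ j → c j ∈ SS (c i)) ∧
      k - (i : ℕ) ≤ (SS (c i)).ncard :=
  clique_in_searchSpace_general G Gplus hle π k c hc hclique hmono SS hSS
end

section
/- Let G = (V,E) be a graph with n vertices, L a hierarchical customizable hub labeling of G respecting an order π, and α ≥ 2/3. Then there exists a set W of at least α·n vertices and an α-balanced separator S of G such that for every v ∈ W, S ⊆ L(v); in particular at least α·n vertices have |L(v)| ≥ b_α, the minimum size of an α-balanced separator. -/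
/-- `S` is an `α`-balanced separator of `G`: every connected component of
`G[V ∖ S]` has at most `α·n` vertices. -/
def IsBalancedSeparator {V : Type*} [Fintype V] (G : SimpleGraph V) (α : ℝ)
    (S : Finset V) : Prop :=
  ∀ C : (G.induce ((↑S : Set V)ᶜ)).ConnectedComponent,
    (C.supp.ncard : ℝ) ≤ α * Fintype.card V

/-- `b_α`: the minimum size of an `α`-balanced separator of `G`. -/
noncomputable def minBalSepSize {V : Type*} [Fintype V] (G : SimpleGraph V)
    (α : ℝ) : ℕ :=
  sInf {m : ℕ | ∃ S : Finset V, IsBalancedSeparator G α S ∧ S.card = m}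

/-!
The vertex `w` of highest rank `π` in a connected vertex set `C` lies in `L v` for every
`v ∈ C`: a path from `v` to `w` inside `C` contains a common hub `x ∈ L v ∩ L w`, and
`x ∈ L w` forces `π w ≤ π x`, hence `x = w`.

Now take `T` of maximal size such that some component `C` of `G - T` has more than `α n`
vertices and `T ⊆ L v` for all `v ∈ C`, and let `w` be the top vertex of `C`. Then
`T ∪ {w} ⊆ L v` for all `v ∈ C`. Since `α ≥ 1/2`, a component of `G - (T ∪ {w})` with more
than `α n` vertices would overlap `C`, hence lie inside it, contradicting the maximality of
`T`. So `S = T ∪ {w}` and `W = C` work (and `S = ∅`, `W = V` if `G` has no large component).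
-/

namespace SimpleGraph

variable {V : Type*} {G : SimpleGraph V} {T T' : Set V} {a b c : V}

/-- The vertex set of the component of `a` in `G - T` (empty when `a ∈ T`). -/
def reachAvoiding (G : SimpleGraph V) (T : Set V) (a : V) : Set V :=
  {u | ∃ p : G.Walk a u, ∀ x ∈ p.support, x ∉ T}

lemma notMem_of_mem_reachAvoiding (h : b ∈ G.reachAvoiding T a) : b ∉ T :=
  h.elim fun p hp => hp b p.end_mem_support

lemma reachAvoiding_symm (h : b ∈ G.reachAvoiding T a) : a ∈ G.reachAvoiding T b :=
  h.elim fun p hp => ⟨p.reverse, fun x hx => hp x (by simpa using hx)⟩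

lemma reachAvoiding_trans (hab : b ∈ G.reachAvoiding T a) (hbc : c ∈ G.reachAvoiding T b) :
    c ∈ G.reachAvoiding T a := by
  obtain ⟨p, hp⟩ := hab
  obtain ⟨q, hq⟩ := hbc
  refine ⟨p.append q, fun x hx => ?_⟩
  rcases (Walk.mem_support_append_iff _ _).mp hx with hx | hx
  exacts [hp x hx, hq x hx]

lemma reachAvoiding_eq_of_mem (h : b ∈ G.reachAvoiding T a) :
    G.reachAvoiding T b = G.reachAvoiding T a :=
  Set.ext fun _ => ⟨reachAvoiding_trans h, reachAvoiding_trans (reachAvoiding_symm h)⟩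

lemma reachAvoiding_anti (h : T ⊆ T') : G.reachAvoiding T' a ⊆ G.reachAvoiding T a :=
  fun _ ⟨p, hp⟩ => ⟨p, fun x hx hxT => hp x hx (h hxT)⟩

lemma support_subset_reachAvoiding {p : G.Walk a b} (hp : ∀ x ∈ p.support, x ∉ T) :
    ∀ x ∈ p.support, x ∈ G.reachAvoiding T a := by
  intro x hx
  obtain ⟨q, r, rfl⟩ := Walk.mem_support_iff_exists_append.mp hx
  exact ⟨q, fun y hy => hp y ((Walk.mem_support_append_iff _ _).mpr (.inl hy))⟩

lemma preconnected_induce_reachAvoiding : (G.induce (G.reachAvoiding T a)).Preconnected := by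
  rintro ⟨u, hu⟩ ⟨v, hv⟩
  obtain ⟨p, hp⟩ := reachAvoiding_symm hu
  obtain ⟨q, hq⟩ := hv
  have hpq : ∀ x ∈ (p.append q).support, x ∉ T := fun x hx => by
    rcases (Walk.mem_support_append_iff _ _).mp hx with hx | hx
    exacts [hp x hx, hq x hx]
  have hsub : ∀ x ∈ (p.append q).support, x ∈ G.reachAvoiding T a := fun x hx =>
    reachAvoiding_trans hu (support_subset_reachAvoiding hpq x hx)
  exact ((p.append q).induce _ hsub).reachable

lemma image_val_supp_connectedComponentMk (v : ↥Tᶜ) :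
    Subtype.val '' ((G.induce Tᶜ).connectedComponentMk v).supp = G.reachAvoiding T v := by
  ext x
  constructor
  · rintro ⟨y, hy, rfl⟩
    obtain ⟨p⟩ := (ConnectedComponent.eq.mp hy).symm
    refine ⟨p.map (Embedding.induce _).toHom, fun z hz => ?_⟩
    replace hz : z ∈ p.support.map (Embedding.induce (G := G) Tᶜ).toHom := by
      rwa [← Walk.support_map]
    obtain ⟨u, _, rfl⟩ := List.mem_map.mp hz
    exact u.2
  · rintro ⟨p, hp⟩
    exact ⟨_, ConnectedComponent.eq.mpr (p.induce Tᶜ hp).reachable.symm, rfl⟩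

end SimpleGraph

section Separator

open SimpleGraph

variable {V : Type*} [Fintype V] {G : SimpleGraph V} {α : ℝ}

lemma isBalancedSeparator_of_forall_ncard_reachAvoiding_le {S : Finset V}
    (h : ∀ b ∉ S, ((G.reachAvoiding S b).ncard : ℝ) ≤ α * Fintype.card V) :
    IsBalancedSeparator G α S := by
  refine ConnectedComponent.ind fun v => ?_
  rw [← Set.ncard_image_of_injective _ Subtype.val_injective,
    image_val_supp_connectedComponentMk]
  exact h v v.2

lemma minBalSepSize_le_ncard {S : Finset V} (hS : IsBalancedSeparator G α S) {X : Set V}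
    (hSX : ↑S ⊆ X) : minBalSepSize G α ≤ X.ncard :=
  calc minBalSepSize G α ≤ S.card := Nat.sInf_le ⟨S, hS, rfl⟩
    _ = (S : Set V).ncard := (Set.ncard_coe_finset S).symm
    _ ≤ X.ncard := Set.ncard_le_ncard hSX

lemma reachAvoiding_subset_of_large (hα : 1 / 2 ≤ α) {T T' : Set V} (hTT' : T ⊆ T') {a b : V}
    (ha : α * Fintype.card V < (G.reachAvoiding T a).ncard)
    (hb : α * Fintype.card V < (G.reachAvoiding T' b).ncard) :
    G.reachAvoiding T' b ⊆ G.reachAvoiding T a := by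
  have hcard : Nat.card V < (G.reachAvoiding T a).ncard + (G.reachAvoiding T' b).ncard := by
    rw [Nat.card_eq_fintype_card]
    exact_mod_cast (by nlinarith [(Fintype.card V).cast_nonneg (α := ℝ)] :
      (Fintype.card V : ℝ) < (G.reachAvoiding T a).ncard + (G.reachAvoiding T' b).ncard)
  obtain ⟨x, hxa, hxb⟩ := Set.nonempty_inter_of_lt_ncard_add_ncard hcard
  rw [← reachAvoiding_eq_of_mem hxa, ← reachAvoiding_eq_of_mem hxb]
  exact reachAvoiding_anti hTT'

end Separator

section HubLabeling

open SimpleGraph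

variable {V : Type*} {G : SimpleGraph V} {π : V → ℕ} {L : V → Set V}

lemma mem_label_of_forall_le (hπ : Function.Injective π)
    (hresp : ∀ v u : V, u ∈ L v → π v ≤ π u)
    (hcover : ∀ (s t : V) (p : G.Walk s t), p.IsPath → ∃ x ∈ p.support, x ∈ L s ∩ L t)
    {s : Set V} (hs : (G.induce s).Preconnected) {w : V} (hw : w ∈ s)
    (hmax : ∀ x ∈ s, π x ≤ π w) {v : V} (hv : v ∈ s) : w ∈ L v := by
  classical
  obtain ⟨p⟩ := hs ⟨v, hv⟩ ⟨w, hw⟩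
  set q := p.map (Embedding.induce (G := G) s).toHom
  obtain ⟨x, hxq, hxv, hxw⟩ := hcover v w q.bypass q.bypass_isPath
  have hxs : x ∈ s := by
    have hx : x ∈ p.support.map (Embedding.induce (G := G) s).toHom := by
      rw [← Walk.support_map]
      exact q.support_bypass_subset_support hxq
    obtain ⟨y, _, rfl⟩ := List.mem_map.mp hx
    exact y.2
  rwa [hπ (le_antisymm (hmax x hxs) (hresp w x hxw))] at hxv

variable [Fintype V] {α : ℝ}

theorem exists_balancedSeparator_subset_labels (hπ : Function.Injective π)
    (hresp : ∀ v u : V, u ∈ L v → π v ≤ π u)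
    (hcover : ∀ (s t : V) (p : G.Walk s t), p.IsPath → ∃ x ∈ p.support, x ∈ L s ∩ L t)
    (hα : 1 / 2 ≤ α) {a : V}
    (ha : α * Fintype.card V < (G.reachAvoiding ∅ a).ncard) :
    ∃ W S : Finset V, α * Fintype.card V ≤ W.card ∧ IsBalancedSeparator G α S ∧
      ∀ v ∈ W, (S : Set V) ⊆ L v := by
  classical
  obtain ⟨T, hT, hTmax⟩ := Finset.exists_max_image
    (Finset.univ.filter fun T : Finset V => ∃ a, α * Fintype.card V < (G.reachAvoiding T a).ncard ∧
      ∀ v ∈ G.reachAvoiding T a, (T : Set V) ⊆ L v)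
    Finset.card ⟨∅, by simpa using ⟨a, ha⟩⟩
  obtain ⟨a, hlarge, hlabel⟩ := (Finset.mem_filter.mp hT).2
  set C := G.reachAvoiding T a
  have hCne : C.Nonempty := Set.nonempty_of_ncard_ne_zero fun h => by
    rw [h, Nat.cast_zero] at hlarge
    exact hlarge.not_ge (by positivity)
  obtain ⟨w, hwC, hwmax⟩ := Set.exists_max_image C π C.toFinite hCne
  have hlabel' : ∀ v ∈ C, ↑(insert w T) ⊆ L v := fun v hv => by
    rw [Finset.coe_insert, Set.insert_subset_iff]
    exact ⟨mem_label_of_forall_le hπ hresp hcover preconnected_induce_reachAvoiding hwC hwmax hv,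
      hlabel v hv⟩
  refine ⟨C.toFinset, insert w T, ?_, ?_, by simpa using hlabel'⟩
  · rw [← Set.ncard_eq_toFinset_card']
    exact hlarge.le
  · refine isBalancedSeparator_of_forall_ncard_reachAvoiding_le fun b _ => not_lt.mp fun hb => ?_
    have hsub : G.reachAvoiding (insert w T : Finset V) b ⊆ C :=
      reachAvoiding_subset_of_large hα (by simp) hlarge hb
    have hle := hTmax (insert w T)
      (Finset.mem_filter.mpr ⟨Finset.mem_univ _, b, hb, fun v hv => hlabel' v (hsub hv)⟩)
    rw [Finset.card_insert_of_notMem (notMem_of_mem_reachAvoiding hwC)] at hle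
    omega

end HubLabeling

theorem HCuHL_label_lower_bound_general {V : Type*} [Fintype V]
    (G : SimpleGraph V) (π : V → ℕ) (hπ : Function.Injective π)
    (L : V → Set V)
    (hresp : ∀ v u : V, u ∈ L v → π v ≤ π u)
    (hcover : ∀ (s t : V) (p : G.Walk s t), p.IsPath →
      ∃ x ∈ p.support, x ∈ L s ∩ L t)
    (α : ℝ) (hα : 2 / 3 ≤ α) (hα1 : α < 1) :
    ∃ (W S : Finset V),
      α * Fintype.card V ≤ W.card ∧
      IsBalancedSeparator G α S ∧
      (∀ v ∈ W, (↑S : Set V) ⊆ L v) ∧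
      (∀ v ∈ W, minBalSepSize G α ≤ (L v).ncard) := by
  obtain ⟨W, S, hW, hS, hSL⟩ : ∃ W S : Finset V, α * Fintype.card V ≤ W.card ∧
      IsBalancedSeparator G α S ∧ ∀ v ∈ W, (S : Set V) ⊆ L v := by
    by_cases hsmall : ∀ a, ((G.reachAvoiding ∅ a).ncard : ℝ) ≤ α * Fintype.card V
    · refine ⟨Finset.univ, ∅, ?_,
        isBalancedSeparator_of_forall_ncard_reachAvoiding_le fun b _ => by simpa using hsmall b,
        by simp⟩
      rw [Finset.card_univ]
      exact mul_le_of_le_one_left (Nat.cast_nonneg _) hα1.le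
    · obtain ⟨a, ha⟩ := not_forall.mp hsmall
      exact exists_balancedSeparator_subset_labels hπ hresp hcover (by linarith) (not_le.mp ha)
  exact ⟨W, S, hW, hS, hSL, fun v hv => minBalSepSize_le_ncard hS (hSL v hv)⟩

/-- For any hierarchical customizable hub labeling `L` of `G` and any
`α ∈ [2/3, 1)`, there is a set `W` of at least `α·n` vertices and an `α`-balanced
separator `S` with `S ⊆ L(v)` for all `v ∈ W`; in particular all `v ∈ W` satisfy
`|L(v)| ≥ b_α`. -/
theorem HCuHL_label_lower_bound {V : Type*} [Fintype V] [DecidableEq V]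
    (G : SimpleGraph V) (π : V → ℕ) (hπ : Function.Injective π)
    (L : V → Set V)
    (hresp : ∀ v u : V, u ∈ L v → π v ≤ π u)
    (hcover : ∀ (s t : V) (p : G.Walk s t), p.IsPath →
      ∃ x ∈ p.support, x ∈ L s ∩ L t)
    (α : ℝ) (hα : 2 / 3 ≤ α) (hα1 : α < 1) :
    ∃ (W S : Finset V),
      α * Fintype.card V ≤ W.card ∧
      IsBalancedSeparator G α S ∧
      (∀ v ∈ W, (↑S : Set V) ⊆ L v) ∧
      (∀ v ∈ W, minBalSepSize G α ≤ (L v).ncard) :=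
  HCuHL_label_lower_bound_general G π hπ L hresp hcover α hα hα1
end

section
/- Let G = (V,E) with |V| = n, L a customizable hub labeling of G, and α ≥ 1/2. Then there are at least ((2α−1)/(2α))·n vertices v with |L(v)| ≥ b_α, where b_α is the minimum size of an α-balanced separator of G. Consequently the average label size satisfies L_avg ≥ ((2α−1)/(2α))·b_α. -/
/-- For any customizable hub labeling `L` of `G` and any
`α ∈ [1/2, 1)` there are at least `((2α-1)/(2α))·n` vertices `v` with
`|L(v)| ≥ b_α`; consequently the average label size is at least
`((2α-1)/(2α))·b_α`. -/
theorem CuHL_label_lower_bound {V : Type*} [Fintype V] [DecidableEq V]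
    (G : SimpleGraph V) (L : V → Set V)
    (hcover : ∀ (s t : V) (p : G.Walk s t), p.IsPath →
      ∃ x ∈ p.support, x ∈ L s ∩ L t)
    (α : ℝ) (hα : 1 / 2 ≤ α) (hα1 : α < 1) :
    (∃ W : Finset V,
      (2 * α - 1) / (2 * α) * Fintype.card V ≤ W.card ∧
      ∀ v ∈ W, minBalSepSize G α ≤ (L v).ncard) ∧
    (2 * α - 1) / (2 * α) * minBalSepSize G α ≤
      (∑ v : V, ((L v).ncard : ℝ)) / Fintype.card V := by
  classical
  have hα0 : (0:ℝ) < α := lt_of_lt_of_le (by norm_num) hα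
  set n := Fintype.card V with hn
  set b := minBalSepSize G α with hb
  -- every vertex is in its own label
  have hself : ∀ v, v ∈ L v := by
    intro v
    obtain ⟨x, hx, hx2⟩ := hcover v v SimpleGraph.Walk.nil SimpleGraph.Walk.IsPath.nil
    simp only [SimpleGraph.Walk.support_nil, List.mem_singleton] at hx
    subst hx; exact hx2.1
  -- big component for small-label vertices
  have hbig : ∀ v : V, (L v).ncard < b → ∃ Dv : Set V,
      (∀ x ∈ Dv, x ∉ L v) ∧ (α * n < Dv.ncard) ∧
      (∀ u ∈ Dv, ∀ z ∈ Dv, ∃ w : G.Walk u z, ∀ x ∈ w.support, x ∈ Dv) := by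
    intro v hv
    have hfin : (L v).Finite := Set.toFinite _
    have hnotbal : ¬ IsBalancedSeparator G α hfin.toFinset := by
      intro hbal
      have h1 : b ≤ hfin.toFinset.card := Nat.sInf_le ⟨hfin.toFinset, hbal, rfl⟩
      rw [← Set.ncard_eq_toFinset_card _ hfin] at h1
      omega
    rw [IsBalancedSeparator] at hnotbal
    push_neg at hnotbal
    obtain ⟨C, hC⟩ := hnotbal
    have hcoe : (↑hfin.toFinset : Set V) = L v := hfin.coe_toFinset
    refine ⟨Subtype.val '' C.supp, ?_, ?_, ?_⟩
    · rintro x ⟨y, -, rfl⟩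
      intro hmem
      exact y.2 (Finset.mem_coe.mpr (hfin.mem_toFinset.mpr hmem))
    · rw [Set.ncard_image_of_injective _ Subtype.val_injective]
      exact hC
    · rintro u ⟨u', hu', rfl⟩ z ⟨z', hz', rfl⟩
      rw [SimpleGraph.ConnectedComponent.mem_supp_iff] at hu' hz'
      obtain ⟨w'⟩ := SimpleGraph.ConnectedComponent.exact (hu'.trans hz'.symm)
      refine ⟨w'.map ⟨Subtype.val, fun h => h⟩, ?_⟩
      intro x hx
      rw [SimpleGraph.Walk.support_map] at hx
      obtain ⟨y, hy, rfl⟩ := List.mem_map.mp hx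
      refine ⟨y, ?_, rfl⟩
      rw [SimpleGraph.ConnectedComponent.mem_supp_iff, ← hu']
      exact (SimpleGraph.ConnectedComponent.sound ((w'.takeUntil y hy).reachable)).symm
  -- choose the big components
  have hex : ∀ v : V, ∃ Dv : Set V, (L v).ncard < b →
      ((∀ x ∈ Dv, x ∉ L v) ∧ (α * n < Dv.ncard) ∧
       (∀ u ∈ Dv, ∀ z ∈ Dv, ∃ w : G.Walk u z, ∀ x ∈ w.support, x ∈ Dv)) := by
    intro v
    by_cases h : (L v).ncard < b
    · obtain ⟨Dv, h1⟩ := hbig v h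
      exact ⟨Dv, fun _ => h1⟩
    · exact ⟨∅, fun h' => absurd h' h⟩
  choose D hD using hex
  -- key lemma: no mutual membership
  have hF : ∀ u, (L u).ncard < b → ∀ v, (L v).ncard < b →
      u ∈ D v → v ∈ D u → False := by
    intro u hu v hv huDv hvDu
    obtain ⟨hDu1, hDu2, hDu3⟩ := hD u hu
    obtain ⟨hDv1, hDv2, hDv3⟩ := hD v hv
    have hun : (D u ∪ D v).ncard ≤ n := by
      have h1 := Set.ncard_le_ncard (Set.subset_univ (D u ∪ D v)) Set.finite_univ
      rwa [Set.ncard_univ, Nat.card_eq_fintype_card] at h1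
    have hsum : (D u ∩ D v).ncard + (D u ∪ D v).ncard = (D u).ncard + (D v).ncard :=
      Set.ncard_inter_add_ncard_union _ _ (Set.toFinite _) (Set.toFinite _)
    have hne : (D u ∩ D v).Nonempty := by
      rw [Set.nonempty_iff_ne_empty]
      intro hemp
      rw [hemp, Set.ncard_empty, zero_add] at hsum
      have h3 : (D u).ncard + (D v).ncard ≤ n := hsum ▸ hun
      have h4 : (((D u).ncard : ℝ) + ((D v).ncard : ℝ)) ≤ (n : ℝ) := by exact_mod_cast h3
      have hn2 : (n:ℝ) ≤ 2 * (α * n) := by nlinarith [Nat.cast_nonneg (α := ℝ) n]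
      linarith
    obtain ⟨z, hzu, hzv⟩ := hne
    obtain ⟨w1, hw1⟩ := hDv3 u huDv z hzv
    obtain ⟨w2, hw2⟩ := hDu3 z hzu v hvDu
    obtain ⟨x, hxs, hxu, hxv⟩ := hcover u v (w1.append w2).bypass (w1.append w2).bypass_isPath
    have hxs' := SimpleGraph.Walk.support_bypass_subset _ hxs
    rw [SimpleGraph.Walk.mem_support_append_iff] at hxs'
    cases hxs' with
    | inl h => exact hDv1 x (hw1 x h) hxv
    | inr h => exact hDu1 x (hw2 x h) hxu
  -- the sets B (small labels) and W (large labels)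
  set B : Finset V := Finset.univ.filter (fun v => (L v).ncard < b) with hBdef
  set W : Finset V := Finset.univ.filter (fun v => b ≤ (L v).ncard) with hWdef
  have hmemB : ∀ v, v ∈ B ↔ (L v).ncard < b := by
    intro v; simp [hBdef]
  have hmemW : ∀ v, v ∈ W ↔ b ≤ (L v).ncard := by
    intro v; simp [hWdef]
  have hcardBW : B.card + W.card = n := by
    have h := Finset.card_filter_add_card_filter_not
      (s := (Finset.univ : Finset V)) (p := fun v => (L v).ncard < b)
    rw [Finset.card_univ] at h
    have h2 : Finset.univ.filter (fun v => ¬ (L v).ncard < b) = W := by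
      apply Finset.filter_congr
      intro v _
      simp [not_lt]
    rw [h2] at h
    exact h
  -- main bound on |W|
  have hWbound : (2*α - 1)/(2*α) * n ≤ (W.card : ℝ) := by
    rcases B.eq_empty_or_nonempty with hBe | hBne
    · have hWn : W.card = n := by rw [hBe] at hcardBW; simpa using hcardBW
      rw [hWn]
      have hr : (2*α-1)/(2*α) ≤ 1 := by
        rw [div_le_one (by linarith)]; linarith
      nlinarith [Nat.cast_nonneg (α := ℝ) n]
    · set a : V → ℕ := fun v => (B.filter (fun u => u ∈ D v)).card with hadef
      have hDcard : ∀ v ∈ B, (D v).ncard ≤ a v + W.card := by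
        intro v hv
        have hfin : (D v).Finite := Set.toFinite _
        have hsub : hfin.toFinset ⊆ B.filter (fun u => u ∈ D v) ∪ W := by
          intro x hx
          rw [Set.Finite.mem_toFinset] at hx
          rcases lt_or_ge ((L x).ncard) b with h | h
          · exact Finset.mem_union_left _ (Finset.mem_filter.mpr ⟨(hmemB x).mpr h, hx⟩)
          · exact Finset.mem_union_right _ ((hmemW x).mpr h)
        calc (D v).ncard = hfin.toFinset.card := Set.ncard_eq_toFinset_card _ hfin
          _ ≤ (B.filter (fun u => u ∈ D v) ∪ W).card := Finset.card_le_card hsub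
          _ ≤ a v + W.card := Finset.card_union_le _ _
      have ha : ∀ v, a v = ∑ u ∈ B, if u ∈ D v then 1 else 0 := by
        intro v; rw [hadef]; exact Finset.card_filter _ _
      have hsum2 : 2 * (∑ v ∈ B, a v) ≤ B.card * B.card := by
        have e1 : ∑ v ∈ B, ∑ u ∈ B, (if u ∈ D v then 1 else 0) = ∑ v ∈ B, a v :=
          Finset.sum_congr rfl (fun v _ => (ha v).symm)
        have e2 : ∑ v ∈ B, ∑ u ∈ B, (if v ∈ D u then 1 else 0) = ∑ v ∈ B, a v := by
          rw [Finset.sum_comm]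
          exact Finset.sum_congr rfl (fun u _ => (ha u).symm)
        have e3 : ∑ v ∈ B, ∑ u ∈ B, ((if u ∈ D v then 1 else 0) + (if v ∈ D u then 1 else 0))
            = 2 * ∑ v ∈ B, a v := by
          rw [two_mul]
          calc ∑ v ∈ B, ∑ u ∈ B, ((if u ∈ D v then 1 else 0) + (if v ∈ D u then 1 else 0))
              = (∑ v ∈ B, ∑ u ∈ B, (if u ∈ D v then 1 else 0))
                + ∑ v ∈ B, ∑ u ∈ B, (if v ∈ D u then 1 else 0) := by
                rw [← Finset.sum_add_distrib]
                exact Finset.sum_congr rfl (fun v _ => Finset.sum_add_distrib)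
            _ = (∑ v ∈ B, a v) + ∑ v ∈ B, a v := by rw [e1, e2]
        rw [← e3]
        calc ∑ v ∈ B, ∑ u ∈ B, ((if u ∈ D v then 1 else 0) + (if v ∈ D u then 1 else 0))
            ≤ ∑ v ∈ B, ∑ u ∈ B, 1 := by
              apply Finset.sum_le_sum; intro v hv
              apply Finset.sum_le_sum; intro u hu
              by_cases h1 : u ∈ D v
              · by_cases h2 : v ∈ D u
                · exact absurd h2 (fun h2 =>
                    hF u ((hmemB u).mp hu) v ((hmemB v).mp hv) h1 h2)
                · simp [h1, h2]
              · by_cases h2 : v ∈ D u <;> simp [h1, h2]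
          _ = B.card * B.card := by
              simp [Finset.sum_const, mul_comm]
      have hβpos : 0 < (B.card : ℝ) := by exact_mod_cast Finset.card_pos.mpr hBne
      have hlow : (B.card : ℝ) * (α * n - W.card) < ∑ v ∈ B, (a v : ℝ) := by
        have hpt : ∀ v ∈ B, α * n - (W.card:ℝ) < (a v : ℝ) := by
          intro v hv
          have h1 := (hD v ((hmemB v).mp hv)).2.1
          have h2 : ((D v).ncard : ℝ) ≤ (a v : ℝ) + (W.card : ℝ) := by
            exact_mod_cast hDcard v hv
          linarith
        calc (B.card:ℝ) * (α*n - W.card) = ∑ _v ∈ B, (α*n - (W.card:ℝ)) := by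
              rw [Finset.sum_const, nsmul_eq_mul]
          _ < ∑ v ∈ B, (a v : ℝ) := Finset.sum_lt_sum_of_nonempty hBne hpt
      have hup : ∑ v ∈ B, (a v : ℝ) ≤ (B.card:ℝ) * B.card / 2 := by
        have h1 : ((2 * ∑ v ∈ B, a v : ℕ) : ℝ) ≤ ((B.card * B.card : ℕ) : ℝ) := by
          exact_mod_cast hsum2
        push_cast at h1
        linarith
      have h5 : α * n - (W.card:ℝ) < (B.card:ℝ)/2 := by
        have h' : (B.card:ℝ) * (α*n - W.card) < (B.card:ℝ) * ((B.card:ℝ)/2) := by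
          calc (B.card:ℝ) * (α*n - W.card) < ∑ v ∈ B, (a v : ℝ) := hlow
            _ ≤ (B.card:ℝ) * B.card / 2 := hup
            _ = (B.card:ℝ) * ((B.card:ℝ)/2) := by ring
        exact lt_of_mul_lt_mul_left h' (le_of_lt hβpos)
      have hβω : (B.card:ℝ) + (W.card:ℝ) = n := by exact_mod_cast hcardBW
      have h6 : (2*α - 1) * n < (W.card:ℝ) := by linarith
      have h7 : (2*α-1)/(2*α) * n ≤ (2*α-1) * n := by
        apply mul_le_mul_of_nonneg_right _ (Nat.cast_nonneg n)
        apply div_le_self (by linarith) (by linarith)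
      linarith
  constructor
  · exact ⟨W, hWbound, fun v hv => (hmemW v).mp hv⟩
  · rcases Nat.eq_zero_or_pos n with h0 | hpos
    · have hV : IsEmpty V := by
        rw [← Fintype.card_eq_zero_iff]; exact h0
      have hb0 : b = 0 := by
        have hbal : IsBalancedSeparator G α (∅ : Finset V) := by
          intro C
          haveI : IsEmpty ((↑(∅ : Finset V) : Set V)ᶜ : Set V) := ⟨fun x => hV.elim x.1⟩
          have hs : C.supp = ∅ := Set.eq_empty_of_isEmpty _
          rw [hs, Set.ncard_empty]
          have : (n : ℝ) = 0 := by exact_mod_cast h0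
          rw [← hn, this]
          simp
        have h1 : b ≤ 0 := Nat.sInf_le ⟨∅, hbal, Finset.card_empty⟩
        omega
      rw [hb0]
      push_cast
      rw [mul_zero]
      positivity
    · have hnpos : (0:ℝ) < n := by exact_mod_cast hpos
      rw [le_div_iff₀ hnpos]
      have s1 : (W.card : ℝ) * b ≤ ∑ v ∈ W, ((L v).ncard : ℝ) := by
        calc (W.card:ℝ) * b = ∑ _v ∈ W, (b:ℝ) := by rw [Finset.sum_const, nsmul_eq_mul]
          _ ≤ ∑ v ∈ W, ((L v).ncard:ℝ) :=
            Finset.sum_le_sum (fun v hv => by exact_mod_cast (hmemW v).mp hv)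
      have s2 : ∑ v ∈ W, ((L v).ncard:ℝ) ≤ ∑ v : V, ((L v).ncard:ℝ) :=
        Finset.sum_le_sum_of_subset_of_nonneg (Finset.subset_univ W)
          (fun v _ _ => by positivity)
      have hbnn : (0:ℝ) ≤ (b:ℝ) := Nat.cast_nonneg b
      have h8 := mul_le_mul_of_nonneg_right hWbound hbnn
      have h9 : (2*α-1)/(2*α) * (b:ℝ) * (n:ℝ) = (2*α-1)/(2*α) * (n:ℝ) * (b:ℝ) := by ring
      rw [h9]
      linarith
end

section
/- For every customizable hub labeling L of a graph G on n vertices, the average label size satisfies L_avg ≥ (1/4)·b_{2/3}, where b_{2/3} is the minimum size of a (2/3)-balanced separator of G. -/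
open Finset

theorem Finset.card_mul_le_sum_of_lt {ι R : Type*} [Semiring R] [LinearOrder R]
    [IsOrderedRing R] (s : Finset ι) {f : ι → R} (hf : ∀ i ∈ s, 0 ≤ f i) (t : R) :
    (#{i ∈ s | t < f i} : R) * t ≤ ∑ i ∈ s, f i :=
  calc (#{i ∈ s | t < f i} : R) * t = #{i ∈ s | t < f i} • t := (nsmul_eq_mul _ _).symm
    _ ≤ ∑ i ∈ s with t < f i, f i := card_nsmul_le_sum _ _ _ fun _ hi => (mem_filter.1 hi).2.le
    _ ≤ ∑ i ∈ s, f i := sum_le_sum_of_subset_of_nonneg (filter_subset _ _) fun i hi _ => hf i hi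

theorem Finset.card_sub_sum_div_le_card_filter_le {ι R : Type*} [Field R] [LinearOrder R]
    [IsStrictOrderedRing R] (s : Finset ι) {f : ι → R} (hf : ∀ i ∈ s, 0 ≤ f i) {t : R}
    (ht : 0 < t) : (#s : R) - (∑ i ∈ s, f i) / t ≤ #{i ∈ s | f i ≤ t} := by
  have hsplit : #{i ∈ s | f i ≤ t} + #{i ∈ s | t < f i} = #s := by
    simpa only [not_le] using card_filter_add_card_filter_not (s := s) fun i => f i ≤ t
  rw [sub_le_iff_le_add, ← sub_le_iff_le_add', le_div_iff₀ ht, ← Nat.cast_sub (by omega)]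
  exact (Nat.sub_eq_of_eq_add' hsplit.symm ▸ card_mul_le_sum_of_lt s hf t)

theorem Finset.two_mul_sum_card_filter_add_card_le {α : Type*} [DecidableEq α] (A : Finset α)
    (R : α → α → Prop) [DecidableRel R] (hR : ∀ x ∈ A, ∀ y ∈ A, R x y → ¬R y x) :
    2 * ∑ x ∈ A, #{y ∈ A | R x y} + #A ≤ #A * #A := by
  calc 2 * ∑ x ∈ A, #{y ∈ A | R x y} + #A
      = ∑ x ∈ A, ∑ y ∈ A, ((if R x y then 1 else 0) + (if R y x then 1 else 0)
          + if x = y then 1 else 0) := by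
        simp only [sum_add_distrib, card_filter, sum_ite_eq, two_mul]
        rw [sum_comm (f := fun x y => if R y x then 1 else 0)]
        simp
    _ ≤ ∑ x ∈ A, ∑ y ∈ A, 1 := by
        gcongr with x hx y hy
        have := hR x hx y hy
        have := hR x hx x hx
        split_ifs <;> simp_all
    _ = #A * #A := by simp

theorem Finset.card_add_one_lt_of_asymm {V : Type*} [Fintype V] [DecidableEq V] {α : ℝ}
    {A : Finset V} (hA : A.Nonempty) (D : V → Finset V)
    (hD : ∀ w ∈ A, α * Fintype.card V < #(D w))
    (hasymm : ∀ w ∈ A, ∀ x ∈ A, x ∈ D w → w ∉ D x) :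
    (#A : ℝ) + 1 < 2 * (1 - α) * Fintype.card V := by
  have hrow : ∀ w ∈ A, (#A : ℝ) - (1 - α) * Fintype.card V < #{x ∈ A | x ∈ D w} := by
    intro w hw
    have hunion : #A + #(D w) ≤ #{x ∈ A | x ∈ D w} + Fintype.card V := by
      rw [filter_mem_eq_inter, ← card_union_add_card_inter, add_comm]
      exact Nat.add_le_add_left (card_le_univ _) _
    have := hD w hw
    have : (#A : ℝ) + #(D w) ≤ #{x ∈ A | x ∈ D w} + Fintype.card V := by exact_mod_cast hunion
    linarith
  have hsum : (#A : ℝ) * (#A - (1 - α) * Fintype.card V) < ∑ w ∈ A, (#{x ∈ A | x ∈ D w} : ℝ) := by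
    simpa only [sum_const, nsmul_eq_mul] using sum_lt_sum_of_nonempty hA hrow
  have hcount : 2 * (∑ w ∈ A, #{x ∈ A | x ∈ D w} : ℝ) + #A ≤ #A * #A := by
    exact_mod_cast two_mul_sum_card_filter_add_card_le A (fun w x => x ∈ D w) hasymm
  have hApos : (0 : ℝ) < #A := by exact_mod_cast hA.card_pos
  by_contra! h
  nlinarith [mul_le_mul_of_nonneg_left h hApos.le]

def IsCuHL {V : Type*} (G : SimpleGraph V) (L : V → Set V) : Prop :=
  ∀ (s t : V) (p : G.Walk s t), p.IsPath → ∃ x ∈ p.support, x ∈ L s ∩ L t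

namespace SimpleGraph

variable {V : Type*} {G : SimpleGraph V}

theorem ConnectedComponent.exists_walk_support_subset {s : Set V}
    (C : (G.induce s).ConnectedComponent) {a b : s} (ha : a ∈ C.supp) (hb : b ∈ C.supp) :
    ∃ p : G.Walk a b, ∀ y ∈ p.support, y ∈ s := by
  obtain ⟨p⟩ := C.reachable_of_mem_supp ha hb
  refine ⟨p.map (Embedding.induce s).toHom, fun y hy => ?_⟩
  replace hy : y ∈ (p.map (Embedding.induce s).toHom).support := hy
  rw [Walk.support_map, List.mem_map] at hy
  obtain ⟨y, -, rfl⟩ := hy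
  exact y.2

theorem exists_large_of_not_isBalancedSeparator [Fintype V] {α : ℝ} {S : Finset V}
    (h : ¬IsBalancedSeparator G α S) :
    ∃ D : Finset V, α * Fintype.card V < #D ∧
      ∀ a ∈ D, ∀ b ∈ D, ∃ p : G.Walk a b, ∀ y ∈ p.support, y ∉ S := by
  classical
  obtain ⟨C, hC⟩ := not_forall.1 h
  refine ⟨C.supp.toFinset.map (Function.Embedding.subtype _), ?_, ?_⟩
  · rwa [card_map, ← Set.ncard_eq_toFinset_card', ← not_le]
  · simp only [mem_map, Set.mem_toFinset, Function.Embedding.coe_subtype]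
    rintro _ ⟨a, ha, rfl⟩ _ ⟨b, hb, rfl⟩
    simpa using C.exists_walk_support_subset ha hb

end SimpleGraph

theorem minBalSepSize_le {V : Type*} [Fintype V] {G : SimpleGraph V} {α : ℝ} {S : Finset V}
    (h : IsBalancedSeparator G α S) : minBalSepSize G α ≤ #S :=
  Nat.sInf_le ⟨S, h, rfl⟩

namespace IsCuHL

variable {V : Type*} {G : SimpleGraph V} {L : V → Set V}

theorem mem_self (hL : IsCuHL G L) (v : V) : v ∈ L v := by
  obtain ⟨x, hx, hxv, -⟩ := hL v v .nil .nil
  rw [SimpleGraph.Walk.support_nil, List.mem_singleton] at hx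
  subst hx
  exact hxv

theorem walk_append_meets [DecidableEq V] (hL : IsCuHL G L) {a b z : V} (p : G.Walk a z)
    (q : G.Walk z b) : (∃ x ∈ p.support, x ∈ L b) ∨ ∃ x ∈ q.support, x ∈ L a := by
  obtain ⟨x, hx, hxa, hxb⟩ := hL a b (p.append q).bypass (p.append q).bypass_isPath
  have := (p.append q).support_bypass_subset_support hx
  rw [SimpleGraph.Walk.support_append, List.mem_append] at this
  exact this.imp (fun h => ⟨x, h, hxb⟩) fun h => ⟨x, List.mem_of_mem_tail h, hxa⟩

theorem exists_isBalancedSeparator [Fintype V] [DecidableEq V] [∀ v, DecidablePred (· ∈ L v)]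
    (hL : IsCuHL G L) {α : ℝ} (hα : 1 / 2 ≤ α) {A : Finset V} (hA : A.Nonempty)
    (hcard : 2 * (1 - α) * Fintype.card V ≤ #A) :
    ∃ w ∈ A, IsBalancedSeparator G α (L w).toFinset := by
  by_contra! h
  choose! D hDcard hDwalk using fun w hw =>
    SimpleGraph.exists_large_of_not_isBalancedSeparator (h w hw)
  refine (card_add_one_lt_of_asymm hA D hDcard ?_).not_ge (by linarith)
  intro w hw x hx hxw hwx
  have hlt : #(univ : Finset V) < #(D w) + #(D x) := by
    have := hDcard w hw
    have := hDcard x hx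
    have : (Fintype.card V : ℝ) < #(D w) + #(D x) := by nlinarith
    simpa using (by exact_mod_cast this : Fintype.card V < #(D w) + #(D x))
  obtain ⟨z, hz⟩ := inter_nonempty_of_card_lt_card_add_card (subset_univ _) (subset_univ _) hlt
  obtain ⟨p, hp⟩ := hDwalk w hw x hxw z (mem_inter.1 hz).1
  obtain ⟨q, hq⟩ := hDwalk x hx z (mem_inter.1 hz).2 w hwx
  rcases hL.walk_append_meets p q with ⟨y, hy, hyL⟩ | ⟨y, hy, hyL⟩
  · exact hp y hy (Set.mem_toFinset.2 hyL)
  · exact hq y hy (Set.mem_toFinset.2 hyL)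

end IsCuHL

theorem CuHL_avg_label_ge_quarter_sep_general {V : Type*} [Fintype V]
    (G : SimpleGraph V) (L : V → Set V)
    (hcover : ∀ (s t : V) (p : G.Walk s t), p.IsPath →
      ∃ x ∈ p.support, x ∈ L s ∩ L t) :
    (1 / 4 : ℝ) * minBalSepSize G (2 / 3) ≤
      (∑ v : V, ((L v).ncard : ℝ)) / Fintype.card V := by
  classical
  have hL : IsCuHL G L := hcover
  rcases isEmpty_or_nonempty V with hV | hV
  · have : minBalSepSize G (2 / 3) = 0 :=
      Nat.le_zero.1 (minBalSepSize_le (S := ∅) fun C => isEmptyElim C.out.1)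
    simp [this]
  set n : ℝ := ((Fintype.card V : ℕ) : ℝ)
  set k := (∑ v : V, ((L v).ncard : ℝ)) / n
  have hn : 0 < n := by simp [n, Fintype.card_pos]
  have hk : 0 < k := div_pos (sum_pos (fun v _ => by
    exact_mod_cast (Set.ncard_pos (Set.toFinite _)).2 ⟨v, hL.mem_self v⟩) univ_nonempty) hn
  set A : Finset V := {w | ((L w).ncard : ℝ) ≤ 3 * k}
  have hA : 2 / 3 * n ≤ #A := by
    have := card_sub_sum_div_le_card_filter_le univ (fun v _ => Nat.cast_nonneg (L v).ncard)
      (by positivity : 0 < 3 * k)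
    have hsum : (∑ v : V, ((L v).ncard : ℝ)) / (3 * k) = n / 3 := by
      field_simp
      exact (div_mul_cancel₀ _ hn.ne').symm
    rw [hsum, card_univ] at this
    linarith
  obtain ⟨w, hwA, hw⟩ := hL.exists_isBalancedSeparator (α := 2 / 3) (by norm_num)
    (card_pos.1 (by exact_mod_cast (by positivity : (0 : ℝ) < 2 / 3 * n).trans_le hA))
    (by linarith)
  have hb : (minBalSepSize G (2 / 3) : ℝ) ≤ (L w).ncard := by
    exact_mod_cast (minBalSepSize_le hw).trans_eq (Set.ncard_eq_toFinset_card' _).symm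
  linarith [(mem_filter.1 hwA).2]

/-- Every customizable hub labeling of `G` has average label size
at least `(1/4)·b_{2/3}`. -/
theorem CuHL_avg_label_ge_quarter_sep {V : Type*} [Fintype V] [DecidableEq V]
    (G : SimpleGraph V) (L : V → Set V)
    (hcover : ∀ (s t : V) (p : G.Walk s t), p.IsPath →
      ∃ x ∈ p.support, x ∈ L s ∩ L t) :
    (1 / 4 : ℝ) * minBalSepSize G (2 / 3) ≤
      (∑ v : V, ((L v).ncard : ℝ)) / Fintype.card V :=
  CuHL_avg_label_ge_quarter_sep_general G L hcover
end

section
/- Let G = (V,E) be a graph on n vertices such that for a distinguished vertex b and vertices a_1,…,a_k with k ≥ (1−α)n (α ≥ 1/2), for each i the set S_i = L(a_i) ∩ L(b) separates a_i from b with the component C_i containing a_i having |C_i| ≤ n/2 (or a_i ∈ S_i with C_i = ∅). If |C_i| < (1−α)n for all i, then S = S_1 ∪ … ∪ S_k is an α-balanced separator of G, and hence |L(b)| ≥ b_α. -/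
/-- The connected component of `x` in `G` after removing `S`: all vertices
reachable from `x` by a walk avoiding `S` (empty if `x ∈ S`). -/
def compAvoiding {V : Type*} (G : SimpleGraph V) (S : Finset V) (x : V) :
    Set V :=
  {y : V | ∃ p : G.Walk x y, ∀ z ∈ p.support, z ∉ S}

/-!
A component of `G - ⋃ Sᵢ` that contains some `aᵢ` lies inside the component `Cᵢ` of `aᵢ` in
`G - Sᵢ`, so it has at most `n / 2 ≤ αn` vertices. A component containing no `aᵢ` misses the
`k ≥ (1 - α)n` distinct vertices `aᵢ`, so it has at most `n - k ≤ αn` vertices.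
-/

open SimpleGraph

section Components

variable {V : Type*} {G : SimpleGraph V} {S T : Finset V}

theorem SimpleGraph.Reachable.mem_compAvoiding_of_subset (hST : S ⊆ T)
    {u v : ↥((↑T : Set V)ᶜ)} (h : (G.induce ((↑T : Set V)ᶜ)).Reachable u v) :
    (v : V) ∈ compAvoiding G S u := by
  obtain ⟨p⟩ := h
  refine ⟨p.map (Embedding.induce _).toHom, fun z hz hzS => ?_⟩
  obtain ⟨w, -, rfl⟩ := List.mem_map.1 (Walk.support_map _ p ▸ hz)
  exact w.2 (hST hzS)

theorem ncard_supp_le_ncard_compAvoiding [Finite V] (hST : S ⊆ T)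
    {C : (G.induce ((↑T : Set V)ᶜ)).ConnectedComponent} {x : ↥((↑T : Set V)ᶜ)}
    (hx : x ∈ C.supp) :
    C.supp.ncard ≤ (compAvoiding G S x).ncard := by
  rw [← Set.ncard_image_of_injective _ Subtype.val_injective]
  refine Set.ncard_le_ncard ?_ (Set.toFinite _)
  rintro _ ⟨y, hy, rfl⟩
  rw [ConnectedComponent.mem_supp_iff] at hx hy
  exact (ConnectedComponent.exact (hx.trans hy.symm)).mem_compAvoiding_of_subset hST

end Components

theorem Set.ncard_add_ncard_le_card_of_disjoint_image_val {V : Type*} [Finite V] {s : Set V}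
    {t : Set s} {A : Set V} (h : Disjoint (Subtype.val '' t) A) :
    t.ncard + A.ncard ≤ Nat.card V := by
  rw [← Set.ncard_image_of_injective _ Subtype.val_injective, ← Set.ncard_union_eq h]
  exact Set.ncard_le_card _

theorem minBalSepSize_le_card {V : Type*} [Fintype V] {G : SimpleGraph V} {α : ℝ}
    {S : Finset V} (h : IsBalancedSeparator G α S) : minBalSepSize G α ≤ S.card :=
  Nat.sInf_le ⟨S, h, rfl⟩

theorem isBalancedSeparator_biUnion {V ι : Type*} [Fintype V] [DecidableEq V] [Fintype ι]
    {G : SimpleGraph V} {α : ℝ} {a : ι → V} (ha : Function.Injective a)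
    (hcard : (1 - α) * Fintype.card V ≤ Fintype.card ι) {S : ι → Finset V}
    (hS : ∀ i, ((compAvoiding G (S i) (a i)).ncard : ℝ) ≤ α * Fintype.card V) :
    IsBalancedSeparator G α (Finset.univ.biUnion S) := by
  intro C
  by_cases hC : ∃ i, ∃ hi : a i ∉ Finset.univ.biUnion S, ⟨a i, hi⟩ ∈ C.supp
  · obtain ⟨i, _, hiC⟩ := hC
    have hle := ncard_supp_le_ncard_compAvoiding
      (Finset.subset_biUnion_of_mem S (Finset.mem_univ i)) hiC
    exact le_trans (by exact_mod_cast hle) (hS i)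
  · have hdisj : Disjoint (Subtype.val '' C.supp) (Set.range a) := by
      rw [Set.disjoint_right]
      rintro _ ⟨i, rfl⟩ ⟨⟨_, hi⟩, hiC, rfl⟩
      exact hC ⟨i, hi, hiC⟩
    have hcount := Set.ncard_add_ncard_le_card_of_disjoint_image_val hdisj
    rw [Set.ncard_range_of_injective ha, Nat.card_eq_fintype_card,
      Nat.card_eq_fintype_card] at hcount
    have : (C.supp.ncard : ℝ) + Fintype.card ι ≤ Fintype.card V := by exact_mod_cast hcount
    linarith

theorem union_of_label_separators_balanced_general {V : Type*} [Fintype V] [DecidableEq V]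
    (G : SimpleGraph V) (α : ℝ) (hα : 1 / 2 ≤ α)
    (k : ℕ) (a : Fin k → V) (ha : Function.Injective a)
    (hk : (1 - α) * Fintype.card V ≤ (k : ℝ))
    (Lb : Finset V) (S : Fin k → Finset V)
    (hSL : ∀ i, S i ⊆ Lb)
    (hhalf : ∀ i, ((compAvoiding G (S i) (a i)).ncard : ℝ) ≤ Fintype.card V / 2) :
    IsBalancedSeparator G α (Finset.univ.biUnion S) ∧
      minBalSepSize G α ≤ Lb.card := by
  have hhalf_le : (Fintype.card V : ℝ) / 2 ≤ α * Fintype.card V := by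
    nlinarith [(Fintype.card V).cast_nonneg (α := ℝ)]
  have hbal : IsBalancedSeparator G α (Finset.univ.biUnion S) :=
    isBalancedSeparator_biUnion ha (by rwa [Fintype.card_fin]) fun i => (hhalf i).trans hhalf_le
  exact ⟨hbal, (minBalSepSize_le_card hbal).trans <|
    Finset.card_le_card (Finset.biUnion_subset.2 fun i _ => hSL i)⟩

/-- Suppose `α ∈ [1/2, 1)`, `b` is a vertex, `a_1, …, a_k` are
distinct vertices with `k ≥ (1-α)n`, each `S_i ⊆ L(b)` separates `a_i` from `b`
with the component `C_i` of `a_i` satisfying `|C_i| ≤ n/2` and `|C_i| < (1-α)n`.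
Then `S = S_1 ∪ … ∪ S_k` is an `α`-balanced separator, and hence
`|L(b)| ≥ b_α`. -/
theorem union_of_label_separators_balanced {V : Type*} [Fintype V] [DecidableEq V]
    (G : SimpleGraph V) (α : ℝ) (hα : 1 / 2 ≤ α) (hα1 : α < 1)
    (b : V) (k : ℕ) (a : Fin k → V) (ha : Function.Injective a)
    (hk : (1 - α) * Fintype.card V ≤ (k : ℝ))
    (Lb : Finset V) (S : Fin k → Finset V)
    (hSL : ∀ i, S i ⊆ Lb)
    (hsep : ∀ i, b ∉ compAvoiding G (S i) (a i))
    (hhalf : ∀ i, ((compAvoiding G (S i) (a i)).ncard : ℝ) ≤ Fintype.card V / 2)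
    (hsmall : ∀ i, ((compAvoiding G (S i) (a i)).ncard : ℝ) <
      (1 - α) * Fintype.card V) :
    IsBalancedSeparator G α (Finset.univ.biUnion S) ∧
      minBalSepSize G α ≤ Lb.card :=
  union_of_label_separators_balanced_general G α hα k a ha hk Lb S hSL hhalf
end
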